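/- In the evidence-based semantics, the fully-static fragment never fails: if a closed term t is well-typed using only fully static (?-free) types, so that every evidence appearing in t is fully static, then reduction of t never produces error (every meet of evidences encountered during reduction is defined). -/

import Mathlib

inductive GType : Type
  | int
  | bool
  | unk
  | arrow (a b : GType)
deriving DecidableEq

/-- Consistency on gradual types. -/
inductive Consist : GType → GType → Prop
  | unkL (G : GType) : Consist GType.unk G
  | unkR (G : GType) : Consist G GType.unk
  | int : Consist GType.int GType.int
  | bool : Consist GType.bool GType.bool
  | arrow {a a' b b' : GType} : Consist a a' → Consist b b' →
      Consist (GType.arrow a b) (GType.arrow a' b')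

/-- Syntactic precision on gradual types. -/
inductive SPrec : GType → GType → Prop
  | unk (G : GType) : SPrec G GType.unk
  | int : SPrec GType.int GType.int
  | bool : SPrec GType.bool GType.bool
  | arrow {a a' b b' : GType} : SPrec a a' → SPrec b b' →
      SPrec (GType.arrow a b) (GType.arrow a' b')

/-- Partial precision meet on gradual types. -/
def gmeet : GType → GType → Option GType
  | g, GType.unk => some g
  | GType.unk, g => some g
  | GType.int, GType.int => some GType.int
  | GType.bool, GType.bool => some GType.bool
  | GType.arrow a b, GType.arrow a' b' =>
      match gmeet a a', gmeet b b' with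
      | some x, some y => some (GType.arrow x y)
      | _, _ => none
  | _, _ => none

mutual
/-- Terms of the evidence-decorated gradual calculus.
`val ε u G` is an evidence value `ε u` ascribed at type `G`;
`asc ε t G` is an evidence ascription of an arbitrary term. -/
inductive Tm : Type
  | var (x : String)
  | val (ε : GType) (u : Raw) (G : GType)
  | app (t1 t2 : Tm)
  | asc (ε : GType) (t : Tm) (G : GType)

/-- Raw values: booleans, integers, lambda abstractions. -/
inductive Raw : Type
  | rbool (b : Bool)
  | rint (n : Int)
  | rlam (x : String) (G : GType) (t : Tm)
end

mutual
def substTm (x : String) (v : Tm) : Tm → Tm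
  | Tm.var y => if y = x then v else Tm.var y
  | Tm.val ε u G => Tm.val ε (substRaw x v u) G
  | Tm.app t1 t2 => Tm.app (substTm x v t1) (substTm x v t2)
  | Tm.asc ε t G => Tm.asc ε (substTm x v t) G

def substRaw (x : String) (v : Tm) : Raw → Raw
  | Raw.rbool b => Raw.rbool b
  | Raw.rint n => Raw.rint n
  | Raw.rlam y G t => if y = x then Raw.rlam y G t else Raw.rlam y G (substTm x v t)
end

/-- Context update. -/
def upd (Γ : String → Option GType) (x : String) (G : GType) : String → Option GType :=
  fun y => if y = x then some G else Γ y

/-- The empty typing context. -/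
def emptyCtx : String → Option GType := fun _ => none

mutual
/-- Typing of terms: standard simply-typed rules with exact type equality at
application; consistency, justified by evidence `ε` (with `ε ⊑` both types),
appears only at (value) ascriptions. -/
inductive HasTy : (String → Option GType) → Tm → GType → Prop
  | var {Γ x G} : Γ x = some G → HasTy Γ (Tm.var x) G
  | val {Γ ε u G1 G2} : RawTy Γ u G1 → SPrec ε G1 → SPrec ε G2 →
      HasTy Γ (Tm.val ε u G2) G2
  | app {Γ t1 t2 G1 G2} : HasTy Γ t1 (GType.arrow G1 G2) → HasTy Γ t2 G1 →
      HasTy Γ (Tm.app t1 t2) G2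
  | asc {Γ ε t G1 G2} : HasTy Γ t G1 → SPrec ε G1 → SPrec ε G2 →
      HasTy Γ (Tm.asc ε t G2) G2

/-- Typing of raw values. -/
inductive RawTy : (String → Option GType) → Raw → GType → Prop
  | rbool {Γ b} : RawTy Γ (Raw.rbool b) GType.bool
  | rint {Γ n} : RawTy Γ (Raw.rint n) GType.int
  | rlam {Γ x G1 t G2} : HasTy (upd Γ x G1) t G2 →
      RawTy Γ (Raw.rlam x G1 t) (GType.arrow G1 G2)
end

/-- Domain of a function-type evidence. -/
def gdom : GType → Option GType
  | GType.arrow a _ => some a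
  | _ => none

/-- Codomain of a function-type evidence. -/
def gcod : GType → Option GType
  | GType.arrow _ b => some b
  | _ => none

/-- Result of a reduction step: a term or a runtime error. -/
inductive Res : Type
  | term (t : Tm)
  | error

/-- Small-step reduction. Errors arise exactly from undefined meets. -/
inductive Step : Tm → Res → Prop
  | ascv {ε1 ε2 ε : GType} {u G1 G2} : gmeet ε1 ε2 = some ε →
      Step (Tm.asc ε2 (Tm.val ε1 u G1) G2) (Res.term (Tm.val ε u G2))
  | ascvErr {ε1 ε2 : GType} {u G1 G2} : gmeet ε1 ε2 = none →
      Step (Tm.asc ε2 (Tm.val ε1 u G1) G2) Res.error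
  | beta {ε1 ε2 εd εc ε : GType} {x Gx t GA GB u Gu} :
      gdom ε1 = some εd → gcod ε1 = some εc → gmeet ε2 εd = some ε →
      Step (Tm.app (Tm.val ε1 (Raw.rlam x Gx t) (GType.arrow GA GB)) (Tm.val ε2 u Gu))
           (Res.term (Tm.asc εc (substTm x (Tm.val ε u Gx) t) GB))
  | betaErr {ε1 ε2 εd : GType} {x Gx t GA GB u Gu} :
      gdom ε1 = some εd → gmeet ε2 εd = none →
      Step (Tm.app (Tm.val ε1 (Raw.rlam x Gx t) (GType.arrow GA GB)) (Tm.val ε2 u Gu))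
           Res.error
  | appL {t1 t1' t2} : Step t1 (Res.term t1') →
      Step (Tm.app t1 t2) (Res.term (Tm.app t1' t2))
  | appLErr {t1 t2} : Step t1 Res.error → Step (Tm.app t1 t2) Res.error
  | appR {ε u G t2 t2'} : Step t2 (Res.term t2') →
      Step (Tm.app (Tm.val ε u G) t2) (Res.term (Tm.app (Tm.val ε u G) t2'))
  | appRErr {ε u G t2} : Step t2 Res.error →
      Step (Tm.app (Tm.val ε u G) t2) Res.error
  | ascCong {ε t t' G} : Step t (Res.term t') →
      Step (Tm.asc ε t G) (Res.term (Tm.asc ε t' G))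
  | ascCongErr {ε t G} : Step t Res.error → Step (Tm.asc ε t G) Res.error

/-- Fully static gradual types: no occurrence of `?`. -/
inductive FullyStatic : GType → Prop
  | int : FullyStatic GType.int
  | bool : FullyStatic GType.bool
  | arrow {a b : GType} : FullyStatic a → FullyStatic b →
      FullyStatic (GType.arrow a b)

mutual
/-- Terms all of whose type annotations and evidences are fully static. -/
inductive StaticTm : Tm → Prop
  | var (x : String) : StaticTm (Tm.var x)
  | val {ε u G} : FullyStatic ε → StaticRaw u → FullyStatic G →
      StaticTm (Tm.val ε u G)
  | app {t1 t2} : StaticTm t1 → StaticTm t2 → StaticTm (Tm.app t1 t2)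
  | asc {ε t G} : FullyStatic ε → StaticTm t → FullyStatic G →
      StaticTm (Tm.asc ε t G)

inductive StaticRaw : Raw → Prop
  | rbool (b : Bool) : StaticRaw (Raw.rbool b)
  | rint (n : Int) : StaticRaw (Raw.rint n)
  | rlam {x G t} : FullyStatic G → StaticTm t → StaticRaw (Raw.rlam x G t)
end

/-- Reflexive-transitive closure of term reduction. -/
inductive Steps : Tm → Tm → Prop
  | refl (t : Tm) : Steps t t
  | tail {t1 t2 t3} : Steps t1 t2 → Step t2 (Res.term t3) → Steps t1 t3

/-! Over ?-free types precision `SPrec ε G` collapses to `ε = G`, so in a well-typed fully static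
term every evidence equals the type it annotates. At an ascription redex both evidences are thus
the type of the value, and at a β-redex the exact type equality of the application rule makes the
argument's evidence equal to the domain of the function's evidence: every meet met at a redex is
a meet `gmeet a a = some a`, never an error. The reduct is again closed, well typed and fully
static, because substituting a static closed value preserves both typing and staticness. -/

theorem SPrec.refl : ∀ G, SPrec G G
  | GType.int => SPrec.int
  | GType.bool => SPrec.bool
  | GType.unk => SPrec.unk _
  | GType.arrow a b => SPrec.arrow (SPrec.refl a) (SPrec.refl b)

theorem SPrec.eq_of_fullyStatic {a b : GType} (h : SPrec a b) (hb : FullyStatic b) : a = b := by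
  induction h with
  | unk => cases hb
  | int | bool => rfl
  | arrow _ _ iha ihb =>
    cases hb with
    | arrow ha hb => rw [iha ha, ihb hb]

theorem gmeet_self : ∀ a, gmeet a a = some a
  | GType.int | GType.bool | GType.unk => rfl
  | GType.arrow a b => by simp [gmeet, gmeet_self a, gmeet_self b]

theorem upd_upd_self (Γ : String → Option GType) (x : String) (A B : GType) :
    upd (upd Γ x A) x B = upd Γ x B := by
  funext z
  by_cases hz : z = x <;> simp [upd, hz]

theorem upd_comm {x y : String} (hxy : x ≠ y) (Γ : String → Option GType) (A B : GType) :
    upd (upd Γ x A) y B = upd (upd Γ y B) x A := by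
  funext z
  unfold upd
  split_ifs <;> simp_all

theorem upd_mono {Γ Γ' : String → Option GType} (hΓ : ∀ y H, Γ y = some H → Γ' y = some H)
    (x : String) (A : GType) : ∀ y H, upd Γ x A y = some H → upd Γ' x A y = some H := by
  intro y H
  by_cases hy : y = x
  · simp [upd, hy]
  · simpa [upd, hy] using hΓ y H

mutual

theorem HasTy.weaken : ∀ {Γ Γ' : String → Option GType} {t G},
    (∀ y H, Γ y = some H → Γ' y = some H) → HasTy Γ t G → HasTy Γ' t G
  | _, _, _, _, hΓ, HasTy.var h => HasTy.var (hΓ _ _ h)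
  | _, _, _, _, hΓ, HasTy.val hu p1 p2 => HasTy.val (RawTy.weaken hΓ hu) p1 p2
  | _, _, _, _, hΓ, HasTy.app h1 h2 => HasTy.app (HasTy.weaken hΓ h1) (HasTy.weaken hΓ h2)
  | _, _, _, _, hΓ, HasTy.asc h p1 p2 => HasTy.asc (HasTy.weaken hΓ h) p1 p2

theorem RawTy.weaken : ∀ {Γ Γ' : String → Option GType} {u G},
    (∀ y H, Γ y = some H → Γ' y = some H) → RawTy Γ u G → RawTy Γ' u G
  | _, _, _, _, _, RawTy.rbool => RawTy.rbool
  | _, _, _, _, _, RawTy.rint => RawTy.rint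
  | _, _, _, _, hΓ, RawTy.rlam h => RawTy.rlam (HasTy.weaken (upd_mono hΓ _ _) h)

end

theorem HasTy.of_emptyCtx {Γ : String → Option GType} {t : Tm} {G : GType}
    (h : HasTy emptyCtx t G) : HasTy Γ t G :=
  h.weaken fun _ _ h => by simp [emptyCtx] at h

mutual

theorem HasTy.subst {x : String} {v : Tm} {Gx : GType} (hv : HasTy emptyCtx v Gx) :
    ∀ (t : Tm) {Γ G}, HasTy (upd Γ x Gx) t G → HasTy Γ (substTm x v t) G
  | Tm.var y, _, _, HasTy.var h => by
    by_cases hy : y = x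
    · subst hy
      obtain rfl : Gx = _ := by simpa [upd] using h
      simpa [substTm] using hv.of_emptyCtx
    · simpa [substTm, hy] using HasTy.var (by simpa [upd, hy] using h)
  | Tm.val _ u _, _, _, HasTy.val hu p1 p2 => HasTy.val (RawTy.subst hv u hu) p1 p2
  | Tm.app t1 t2, _, _, HasTy.app h1 h2 => HasTy.app (HasTy.subst hv t1 h1) (HasTy.subst hv t2 h2)
  | Tm.asc _ t _, _, _, HasTy.asc h p1 p2 => HasTy.asc (HasTy.subst hv t h) p1 p2

theorem RawTy.subst {x : String} {v : Tm} {Gx : GType} (hv : HasTy emptyCtx v Gx) :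
    ∀ (u : Raw) {Γ G}, RawTy (upd Γ x Gx) u G → RawTy Γ (substRaw x v u) G
  | Raw.rbool _, _, _, RawTy.rbool => RawTy.rbool
  | Raw.rint _, _, _, RawTy.rint => RawTy.rint
  | Raw.rlam y _ t, Γ, _, RawTy.rlam h => by
    by_cases hyx : y = x
    · subst hyx
      rw [upd_upd_self] at h
      simpa [substRaw] using RawTy.rlam h
    · rw [upd_comm (Ne.symm hyx)] at h
      simpa [substRaw, hyx] using RawTy.rlam (HasTy.subst hv t h)

end

mutual

theorem StaticTm.subst {x : String} {v : Tm} (hv : StaticTm v) :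
    ∀ {t}, StaticTm t → StaticTm (substTm x v t)
  | _, StaticTm.var y => by
    unfold substTm
    split
    · exact hv
    · exact StaticTm.var y
  | _, StaticTm.val hε hu hG => StaticTm.val hε (StaticRaw.subst hv hu) hG
  | _, StaticTm.app h1 h2 => StaticTm.app (StaticTm.subst hv h1) (StaticTm.subst hv h2)
  | _, StaticTm.asc hε h hG => StaticTm.asc hε (StaticTm.subst hv h) hG

theorem StaticRaw.subst {x : String} {v : Tm} (hv : StaticTm v) :
    ∀ {u}, StaticRaw u → StaticRaw (substRaw x v u)
  | _, StaticRaw.rbool b => StaticRaw.rbool b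
  | _, StaticRaw.rint n => StaticRaw.rint n
  | _, StaticRaw.rlam hG ht => by
    unfold substRaw
    split
    · exact StaticRaw.rlam hG ht
    · exact StaticRaw.rlam hG (StaticTm.subst hv ht)

end

theorem HasTy.val_inv_of_fullyStatic {Γ : String → Option GType} {ε G G' : GType} {u : Raw}
    (h : HasTy Γ (Tm.val ε u G) G') (hG : FullyStatic G) :
    G' = G ∧ ε = G ∧ ∃ H, RawTy Γ u H ∧ SPrec G H := by
  cases h with
  | val hu p1 p2 =>
    obtain rfl := p2.eq_of_fullyStatic hG
    exact ⟨rfl, rfl, _, hu, p1⟩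

theorem HasTy.asc_val_static {Γ : String → Option GType} {ε1 ε2 G1 G2 G : GType} {u : Raw}
    (h : HasTy Γ (Tm.asc ε2 (Tm.val ε1 u G1) G2) G)
    (hs : StaticTm (Tm.asc ε2 (Tm.val ε1 u G1) G2)) :
    gmeet ε1 ε2 = some ε1 ∧ HasTy Γ (Tm.val ε1 u G2) G ∧ StaticTm (Tm.val ε1 u G2) := by
  cases h with | asc hv p1 p2 => ?_
  cases hs with | asc _ hsv hG2 => ?_
  cases hsv with | val hε1 hu hG1 => ?_
  obtain ⟨rfl, rfl, H, huTy, hH⟩ := hv.val_inv_of_fullyStatic hG1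
  obtain rfl := p1.eq_of_fullyStatic hG1
  obtain rfl := p2.eq_of_fullyStatic hG2
  exact ⟨gmeet_self _, HasTy.val huTy hH (SPrec.refl _), StaticTm.val hε1 hu hG2⟩

theorem HasTy.app_lam_static {ε1 ε2 Gx GA GB Gu G : GType} {x : String} {t : Tm} {u : Raw}
    (h : HasTy emptyCtx (Tm.app (Tm.val ε1 (Raw.rlam x Gx t) (GType.arrow GA GB))
      (Tm.val ε2 u Gu)) G)
    (hs : StaticTm (Tm.app (Tm.val ε1 (Raw.rlam x Gx t) (GType.arrow GA GB)) (Tm.val ε2 u Gu))) :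
    ε1 = GType.arrow GA GB ∧ ε2 = GA ∧
      HasTy emptyCtx (Tm.asc GB (substTm x (Tm.val GA u Gx) t) GB) G ∧
      StaticTm (Tm.asc GB (substTm x (Tm.val GA u Gx) t) GB) := by
  cases h with | app h1 h2 => ?_
  cases hs with | app hs1 hs2 => ?_
  cases hs1 with | val _ hslam hAB => ?_
  cases hslam with | rlam hsGx hst => ?_
  cases hs2 with | val hε2 hu hGu => ?_
  obtain ⟨hG, rfl, H, hlamTy, hH⟩ := h1.val_inv_of_fullyStatic hAB
  cases hG
  cases hlamTy with | rlam hbody => ?_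
  cases hH with | arrow hGx hB => ?_
  obtain ⟨rfl, rfl, H', huTy, hH'⟩ := h2.val_inv_of_fullyStatic hGu
  cases hAB with | arrow _ hGB => ?_
  refine ⟨rfl, rfl, ?_, ?_⟩
  · exact HasTy.asc (HasTy.subst (HasTy.val huTy hH' hGx) t hbody) hB (SPrec.refl _)
  · exact StaticTm.asc hGB (StaticTm.subst (StaticTm.val hε2 hu hsGx) hst) hGB

theorem Step.static_preservation {t : Tm} {r : Res} (hstep : Step t r) {G : GType}
    (h : HasTy emptyCtx t G) (hs : StaticTm t) :
    ∃ t', r = Res.term t' ∧ HasTy emptyCtx t' G ∧ StaticTm t' := by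
  induction hstep generalizing G with
  | ascv hm =>
    obtain ⟨hm', h', hs'⟩ := h.asc_val_static hs
    obtain rfl : _ = _ := Option.some.inj (hm'.symm.trans hm)
    exact ⟨_, rfl, h', hs'⟩
  | ascvErr hm =>
    obtain ⟨hm', -⟩ := h.asc_val_static hs
    cases hm.symm.trans hm'
  | beta hd hc hm =>
    obtain ⟨rfl, rfl, h', hs'⟩ := h.app_lam_static hs
    cases hd; cases hc
    obtain rfl : _ = _ := Option.some.inj ((gmeet_self _).symm.trans hm)
    exact ⟨_, rfl, h', hs'⟩
  | betaErr hd hm =>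
    obtain ⟨rfl, rfl, -⟩ := h.app_lam_static hs
    cases hd
    cases hm.symm.trans (gmeet_self _)
  | appL _ ih =>
    cases h with | app h1 h2 => ?_
    cases hs with | app hs1 hs2 => ?_
    obtain ⟨_, ⟨⟩, h1', hs1'⟩ := ih h1 hs1
    exact ⟨_, rfl, HasTy.app h1' h2, StaticTm.app hs1' hs2⟩
  | appLErr _ ih =>
    cases h with | app h1 _ => ?_
    cases hs with | app hs1 _ => ?_
    obtain ⟨_, ⟨⟩, -⟩ := ih h1 hs1
  | appR _ ih =>
    cases h with | app h1 h2 => ?_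
    cases hs with | app hs1 hs2 => ?_
    obtain ⟨_, ⟨⟩, h2', hs2'⟩ := ih h2 hs2
    exact ⟨_, rfl, HasTy.app h1 h2', StaticTm.app hs1 hs2'⟩
  | appRErr _ ih =>
    cases h with | app _ h2 => ?_
    cases hs with | app _ hs2 => ?_
    obtain ⟨_, ⟨⟩, -⟩ := ih h2 hs2
  | ascCong _ ih =>
    cases h with | asc ht p1 p2 => ?_
    cases hs with | asc hε hst hG => ?_
    obtain ⟨_, ⟨⟩, h', hs'⟩ := ih ht hst
    exact ⟨_, rfl, HasTy.asc h' p1 p2, StaticTm.asc hε hs' hG⟩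
  | ascCongErr _ ih =>
    cases h with | asc ht _ _ => ?_
    cases hs with | asc _ hst _ => ?_
    obtain ⟨_, ⟨⟩, -⟩ := ih ht hst

theorem Steps.static_preservation {t t' : Tm} (hsteps : Steps t t') {G : GType}
    (h : HasTy emptyCtx t G) (hs : StaticTm t) : HasTy emptyCtx t' G ∧ StaticTm t' := by
  induction hsteps with
  | refl => exact ⟨h, hs⟩
  | tail _ hstep ih =>
    obtain ⟨_, ⟨⟩, h', hs'⟩ := hstep.static_preservation ih.1 ih.2
    exact ⟨h', hs'⟩

/-- The fully-static fragment never fails: a closed well-typed term whose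
evidences and annotations are all fully static never reduces to error. -/
theorem static_never_fails :
    ∀ (t : Tm) (G : GType), HasTy emptyCtx t G → StaticTm t →
      ∀ t' : Tm, Steps t t' → ¬ Step t' Res.error := by
  intro t G h hs t' hsteps herr
  obtain ⟨h', hs'⟩ := hsteps.static_preservation h hs
  obtain ⟨_, ⟨⟩, -⟩ := herr.static_preservation h' hs'
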